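/- arXiv:1605.02408 — 6 statements merged into one kernel-verified Lean document; each statement's English description precedes it below -/
import Mathlib

section
/- Let f : R^n → R be differentiable, r : R^n → R convex, S ⊆ R^n convex, and x, x⁺ ∈ S with γ > 0. If for some z ∈ ∂r(x⁺) the inequality (∇f(x) + (1/γ)(x⁺ - x) + z)^T (y - x⁺) ≥ 0 holds for all y ∈ S, then ∇f(x)^T (x - x⁺) + r(x) - r(x⁺) ≥ (1/γ)‖x⁺ - x‖². -/
lemma mul_norm_sub_sq_le_inner_add_inner {E : Type*} [NormedAddCommGroup E]
    [InnerProductSpace ℝ E] (g z x xp : E) (c : ℝ)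
    (h : 0 ≤ (inner ℝ (g + c • (xp - x) + z) (x - xp) : ℝ)) :
    c * ‖xp - x‖ ^ 2 ≤ (inner ℝ g (x - xp) : ℝ) + inner ℝ z (x - xp) := by
  have hself : (inner ℝ (xp - x) (x - xp) : ℝ) = -‖xp - x‖ ^ 2 := by
    rw [← neg_sub xp x, inner_neg_right, real_inner_self_eq_norm_sq]
  rw [inner_add_left, inner_add_left, real_inner_smul_left, hself] at h
  linarith

theorem stmt_3_general (n : ℕ) (r : EuclideanSpace ℝ (Fin n) → ℝ)
    (S : Set (EuclideanSpace ℝ (Fin n)))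
    (g z x xp : EuclideanSpace ℝ (Fin n)) (γ : ℝ)
    (hx : x ∈ S)
    (hz : ∀ u, r xp + (inner ℝ z (u - xp) : ℝ) ≤ r u)
    (hvi : ∀ y ∈ S, 0 ≤ (inner ℝ (g + (1 / γ) • (xp - x) + z) (y - xp) : ℝ)) :
    (1 / γ) * ‖xp - x‖ ^ 2 ≤ (inner ℝ g (x - xp) : ℝ) + r x - r xp := by
  have hvi_x := mul_norm_sub_sq_le_inner_add_inner g z x xp (1 / γ) (hvi x hx)
  have hsubgrad_x := hz x
  linarith

theorem stmt_3 (n : ℕ) (f r : EuclideanSpace ℝ (Fin n) → ℝ)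
    (S : Set (EuclideanSpace ℝ (Fin n)))
    (g z x xp : EuclideanSpace ℝ (Fin n)) (γ : ℝ)
    (hS : Convex ℝ S) (hr : ConvexOn ℝ Set.univ r) (hγ : 0 < γ)
    (hx : x ∈ S) (hxp : xp ∈ S)
    (hgrad : HasGradientAt f g x)
    (hz : ∀ u, r xp + (inner ℝ z (u - xp) : ℝ) ≤ r u)
    (hvi : ∀ y ∈ S, 0 ≤ (inner ℝ (g + (1 / γ) • (xp - x) + z) (y - xp) : ℝ)) :
    (1 / γ) * ‖xp - x‖ ^ 2 ≤ (inner ℝ g (x - xp) : ℝ) + r x - r xp :=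
  stmt_3_general n r S g z x xp γ hx hz hvi
end

section
/- Let f : R^n → R be differentiable, r : R^n → R convex, S ⊆ R^n convex, and ε ≥ 0. If x ∈ S satisfies inf_{y∈S} { ∇f(x)^T (y - x) + r(y) - r(x) } ≥ -ε, then for any γ > 0 and x⁺ = argmin_{y∈S} { ∇f(x)^T y + (1/(2γ))‖y - x‖² + r(y) }, the gradient mapping P_S(x,γ) = (1/γ)(x - x⁺) satisfies ‖P_S(x,γ)‖² ≤ ε/γ. -/
/-!
The objective of the proximal step is `φ y + ‖y - x‖² / (2γ)` with `φ y = ⟪g, y⟫ + r y` convex,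
so its minimiser `x⁺` over `S` satisfies the three-point inequality
`φ x⁺ + ‖x⁺ - x‖² / (2γ) + ‖y - x⁺‖² / (2γ) ≤ φ y + ‖y - x‖² / (2γ)`.
At `y = x` this says that the step decreases `φ` by at least `‖x⁺ - x‖² / γ`, while
`ε`-stationarity of `x` says it decreases `φ` by at most `ε`.
-/
open Set Filter Topology

theorem nonpos_of_forall_le_mul {a b : ℝ} (h : ∀ t ∈ Ioc (0 : ℝ) 1, a ≤ t * b) : a ≤ 0 := by
  have hlim : Tendsto (fun t : ℝ => t * b) (𝓝[>] 0) (𝓝 0) :=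
    ((continuous_mul_const b).tendsto' 0 0 (zero_mul b)).mono_left nhdsWithin_le_nhds
  exact ge_of_tendsto hlim (eventually_of_mem (Ioc_mem_nhdsGT one_pos) h)

section ProximalStep

variable {E : Type*} [NormedAddCommGroup E] [InnerProductSpace ℝ E]
  {S : Set E} {φ : E → ℝ} {k : ℝ} {x xp y : E}

theorem ConvexOn.sub_le_inner_of_isMinOn_add_sq (hφ : ConvexOn ℝ S φ)
    (hmin : IsMinOn (fun z => φ z + k * ‖z - x‖ ^ 2) S xp) (hxp : xp ∈ S) (hy : y ∈ S) :
    φ xp - φ y ≤ 2 * k * inner ℝ (xp - x) (y - xp) := by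
  -- Compare with the competitor `xp + t • (y - xp)`, divide by `t` and let `t → 0`.
  suffices h : φ xp - φ y - 2 * k * inner ℝ (xp - x) (y - xp) ≤ 0 by linarith
  refine nonpos_of_forall_le_mul (b := k * ‖y - xp‖ ^ 2) fun t ⟨ht0, ht1⟩ => ?_
  have hz : xp + t • (y - xp) = (1 - t) • xp + t • y := by module
  have hzS : xp + t • (y - xp) ∈ S := hφ.1.add_smul_sub_mem hxp hy ⟨ht0.le, ht1⟩
  have hconv : φ (xp + t • (y - xp)) ≤ (1 - t) * φ xp + t * φ y := by
    rw [hz]; exact hφ.2 hxp hy (by linarith) ht0.le (by ring)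
  have hnorm : ‖xp + t • (y - xp) - x‖ ^ 2
      = ‖xp - x‖ ^ 2 + 2 * t * inner ℝ (xp - x) (y - xp) + t ^ 2 * ‖y - xp‖ ^ 2 := by
    rw [show xp + t • (y - xp) - x = (xp - x) + t • (y - xp) by abel, norm_add_sq_real,
      real_inner_smul_right, norm_smul, mul_pow, Real.norm_eq_abs, sq_abs]
    ring
  have hle := isMinOn_iff.mp hmin _ hzS
  simp only [hnorm] at hle
  refine le_of_mul_le_mul_left ?_ ht0
  nlinarith

theorem ConvexOn.add_sq_le_of_isMinOn_add_sq (hφ : ConvexOn ℝ S φ)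
    (hmin : IsMinOn (fun z => φ z + k * ‖z - x‖ ^ 2) S xp) (hxp : xp ∈ S) (hy : y ∈ S) :
    φ xp + k * ‖xp - x‖ ^ 2 + k * ‖y - xp‖ ^ 2 ≤ φ y + k * ‖y - x‖ ^ 2 := by
  have hvi := hφ.sub_le_inner_of_isMinOn_add_sq hmin hxp hy
  rw [show y - x = (y - xp) + (xp - x) by abel, norm_add_sq_real, real_inner_comm]
  linarith

end ProximalStep

theorem stmt_4_general (n : ℕ) (r : EuclideanSpace ℝ (Fin n) → ℝ)
    (S : Set (EuclideanSpace ℝ (Fin n)))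
    (g x xp : EuclideanSpace ℝ (Fin n)) (γ ε : ℝ)
    (hS : Convex ℝ S)
    (hr : ConvexOn ℝ Set.univ r)
    (hγ : 0 < γ)
    (hx : x ∈ S)
    (hstat : ∀ y ∈ S, -ε ≤ (inner ℝ g (y - x) : ℝ) + r y - r x)
    (hxp : xp ∈ S)
    (hmin : ∀ y ∈ S,
      (inner ℝ g xp : ℝ) + 1 / (2 * γ) * ‖xp - x‖ ^ 2 + r xp ≤
        (inner ℝ g y : ℝ) + 1 / (2 * γ) * ‖y - x‖ ^ 2 + r y) :
    ‖(1 / γ) • (x - xp)‖ ^ 2 ≤ ε / γ := by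
  have hφ : ConvexOn ℝ S (fun y => inner ℝ g y + r y) :=
    ((innerₛₗ ℝ g).convexOn hS).add (hr.subset (subset_univ S) hS)
  have hprox : IsMinOn (fun y => inner ℝ g y + r y + 1 / (2 * γ) * ‖y - x‖ ^ 2) S xp :=
    isMinOn_iff.mpr fun y hy => by linarith [hmin y hy]
  have hdecrease := hφ.add_sq_le_of_isMinOn_add_sq hprox hxp hx
  rw [sub_self, norm_zero, norm_sub_rev x xp] at hdecrease
  have hlin := hstat xp hxp
  rw [inner_sub_right] at hlin
  have hdist : ‖xp - x‖ ^ 2 / γ ≤ ε := by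
    have : 1 / (2 * γ) * ‖xp - x‖ ^ 2 = ‖xp - x‖ ^ 2 / γ / 2 := by ring
    linarith
  calc ‖(1 / γ) • (x - xp)‖ ^ 2 = ‖xp - x‖ ^ 2 / γ / γ := by
        rw [norm_smul, mul_pow, norm_sub_rev, Real.norm_eq_abs, sq_abs]; ring
    _ ≤ ε / γ := by gcongr

theorem stmt_4 (n : ℕ) (f r : EuclideanSpace ℝ (Fin n) → ℝ)
    (S : Set (EuclideanSpace ℝ (Fin n)))
    (g x xp : EuclideanSpace ℝ (Fin n)) (γ ε : ℝ)
    (hSne : S.Nonempty) (hSc : IsClosed S) (hS : Convex ℝ S)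
    (hr : ConvexOn ℝ Set.univ r)
    (hγ : 0 < γ) (hε : 0 ≤ ε)
    (hx : x ∈ S)
    (hgrad : HasGradientAt f g x)
    (hstat : ∀ y ∈ S, -ε ≤ (inner ℝ g (y - x) : ℝ) + r y - r x)
    (hxp : xp ∈ S)
    (hmin : ∀ y ∈ S,
      (inner ℝ g xp : ℝ) + 1 / (2 * γ) * ‖xp - x‖ ^ 2 + r xp ≤
        (inner ℝ g y : ℝ) + 1 / (2 * γ) * ‖y - x‖ ^ 2 + r y) :
    ‖(1 / γ) • (x - xp)‖ ^ 2 ≤ ε / γ :=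
  stmt_4_general n r S g x xp γ ε hS hr hγ hx hstat hxp hmin
end

section
/- Let Φ = f + r on a compact convex set S ⊆ R^n where f is differentiable satisfying the Hölder condition f(y) ≤ f(x) + ∇f(x)^T(y-x) + (ρ/2)‖y-x‖_p^p on S for some p > 1 and ρ > 0, and r is convex. Consider the generalized conditional gradient iteration x^{k+1} = (1-α_k)x^k + α_k y^k, where y^k minimizes ℓ(y;x^k) = f(x^k) + ∇f(x^k)^T(y - x^k) + r(y) over S and α_k minimizes α∇f(x^k)^T d^k + α^p (ρ/2)‖d^k‖_p^p + (1-α)r(x^k) + α r(y^k) over α ∈ [0,1] with d^k = y^k - x^k. Then for any ε with 0 < ε < diam_p(S)^p ρ, denoting Δℓ^k = -∇f(x^k)^T(y^k - x^k) + r(x^k) - r(y^k), one has Δℓ^k ≤ (ε/(D^p ρ))^{-1/(p-1)} (Φ(x^k) - Φ(x^{k+1})) + ε/2, where D = diam_p(S). -/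
/-!
Convexity of `r` and the Hölder bound at `x` dominate `Φ` along the segment `[x, y]` by the
one-dimensional model `Φ(x) - s Δℓ + s^p (ρ/2) ‖y - x‖_p^p`, whose minimiser `α` the iterate uses.
Comparing with the step `t = (ε / (D^p ρ))^(1/(p-1)) ∈ (0, 1]`, for which `t^p ρ/2 ‖y - x‖_p^p ≤
t^p ρ/2 D^p = t ε/2`, gives `Φ(x) - Φ(x') ≥ t (Δℓ - ε/2)`.
-/

open Set

namespace Real

lemma rpow_one_div_sub_one_rpow {b : ℝ} (hb : 0 < b) {p : ℝ} (hp : p ≠ 1) :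
    (b ^ (1 / (p - 1))) ^ p = b ^ (1 / (p - 1)) * b := by
  have hp1 : p - 1 ≠ 0 := sub_ne_zero.mpr hp
  rw [← rpow_mul hb.le, ← rpow_add_one hb.ne']
  congr 1
  field_simp
  ring

end Real

section PNorm

variable {ι : Type*} [Fintype ι] {p : ℝ}

lemma sum_abs_smul_rpow {a : ℝ} (ha : 0 ≤ a) (v : EuclideanSpace ℝ ι) :
    ∑ i, |(a • v) i| ^ p = a ^ p * ∑ i, |v i| ^ p := by
  rw [Finset.mul_sum]
  refine Finset.sum_congr rfl fun i _ => ?_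
  rw [PiLp.smul_apply, smul_eq_mul, abs_mul, abs_of_nonneg ha, Real.mul_rpow ha (abs_nonneg _)]

lemma sum_abs_sub_rpow_le_sSup_rpow {S : Set (EuclideanSpace ℝ ι)} (hS : IsCompact S)
    (hp : 0 < p) {x y : EuclideanSpace ℝ ι} (hx : x ∈ S) (hy : y ∈ S) :
    ∑ i, |x i - y i| ^ p ≤
      sSup ((fun q : EuclideanSpace ℝ ι × EuclideanSpace ℝ ι =>
        (∑ i, |q.1 i - q.2 i| ^ p) ^ (1 / p)) '' (S ×ˢ S)) ^ p := by
  have hcont : Continuous (fun q : EuclideanSpace ℝ ι × EuclideanSpace ℝ ι =>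
      (∑ i, |q.1 i - q.2 i| ^ p) ^ (1 / p)) := by
    refine Continuous.rpow_const (continuous_finsetSum _ fun i _ => ?_) fun _ => Or.inr ?_
    · exact (by fun_prop : Continuous _).rpow_const fun _ => Or.inr hp.le
    · positivity
  have hsum : 0 ≤ ∑ i, |x i - y i| ^ p := by positivity
  have hle := le_csSup ((hS.prod hS).image hcont).bddAbove ⟨(x, y), ⟨hx, hy⟩, rfl⟩
  calc ∑ i, |x i - y i| ^ p = ((∑ i, |x i - y i| ^ p) ^ (1 / p)) ^ p := by
        rw [← Real.rpow_mul hsum, one_div_mul_cancel hp.ne', Real.rpow_one]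
    _ ≤ _ := Real.rpow_le_rpow (by positivity) hle hp.le

end PNorm

lemma add_le_holder_model_of_convexOn {ι : Type*} [Fintype ι]
    {f r : EuclideanSpace ℝ ι → ℝ} {g : EuclideanSpace ℝ ι → EuclideanSpace ℝ ι}
    {S : Set (EuclideanSpace ℝ ι)} {p ρ : ℝ} (hS : Convex ℝ S) (hr : ConvexOn ℝ S r)
    (hHolder : ∀ u ∈ S, ∀ v ∈ S,
      f v ≤ f u + (inner ℝ (g u) (v - u) : ℝ) + ρ / 2 * ∑ i, |(v - u) i| ^ p)
    {x y : EuclideanSpace ℝ ι} (hx : x ∈ S) (hy : y ∈ S) {α : ℝ} (hα : α ∈ Icc (0 : ℝ) 1) :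
    f ((1 - α) • x + α • y) + r ((1 - α) • x + α • y) ≤
      f x + (α * (inner ℝ (g x) (y - x) : ℝ) + α ^ p * (ρ / 2) * ∑ i, |(y - x) i| ^ p
        + (1 - α) * r x + α * r y) := by
  have hstep : (1 - α) • x + α • y - x = α • (y - x) := by
    rw [smul_sub, sub_smul, one_smul]; abel
  have hα' : 0 ≤ 1 - α := by linarith [hα.2]
  have hf := hHolder x hx _ (hS hx hy hα' hα.1 (sub_add_cancel 1 α))
  rw [hstep, real_inner_smul_right, sum_abs_smul_rpow hα.1] at hf
  have hrα : r ((1 - α) • x + α • y) ≤ (1 - α) * r x + α * r y :=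
    hr.2 hx hy hα' hα.1 (sub_add_cancel 1 α)
  linarith

theorem stmt_6_general (n : ℕ) (f r : EuclideanSpace ℝ (Fin n) → ℝ)
    (g : EuclideanSpace ℝ (Fin n) → EuclideanSpace ℝ (Fin n))
    (S : Set (EuclideanSpace ℝ (Fin n)))
    (p ρ ε D : ℝ) (x y x' : EuclideanSpace ℝ (Fin n)) (α : ℝ)
    (hS : Convex ℝ S) (hScomp : IsCompact S)
    (hr : ConvexOn ℝ Set.univ r)
    (hp : 1 < p) (hρ : 0 < ρ)
    (hHolder : ∀ u ∈ S, ∀ v ∈ S,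
      f v ≤ f u + (inner ℝ (g u) (v - u) : ℝ) + ρ / 2 * ∑ i, |(v - u) i| ^ p)
    (hD : D = sSup ((fun q : EuclideanSpace ℝ (Fin n) × EuclideanSpace ℝ (Fin n) =>
      (∑ i, |q.1 i - q.2 i| ^ p) ^ (1 / p)) '' (S ×ˢ S)))
    (hε : 0 < ε) (hεD : ε < D ^ p * ρ)
    (hx : x ∈ S) (hy : y ∈ S)
    (hα : α ∈ Set.Icc (0 : ℝ) 1)
    (hαmin : ∀ t ∈ Set.Icc (0 : ℝ) 1,
      α * (inner ℝ (g x) (y - x) : ℝ) + α ^ p * (ρ / 2) * ∑ i, |(y - x) i| ^ p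
          + (1 - α) * r x + α * r y ≤
        t * (inner ℝ (g x) (y - x) : ℝ) + t ^ p * (ρ / 2) * ∑ i, |(y - x) i| ^ p
          + (1 - t) * r x + t * r y)
    (hx' : x' = (1 - α) • x + α • y) :
    -(inner ℝ (g x) (y - x) : ℝ) + r x - r y ≤
      (ε / (D ^ p * ρ)) ^ (-(1 / (p - 1))) * ((f x + r x) - (f x' + r x')) + ε / 2 := by
  have hscale : 0 < D ^ p * ρ := hε.trans hεD
  set b := ε / (D ^ p * ρ)
  have hb : 0 < b := div_pos hε hscale
  set t := b ^ (1 / (p - 1))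
  have ht : t ∈ Icc (0 : ℝ) 1 :=
    ⟨by positivity, Real.rpow_le_one hb.le ((div_le_one hscale).2 hεD.le)
      (one_div_nonneg.2 (by linarith))⟩
  have hND : ∑ i, |(y - x) i| ^ p ≤ D ^ p := by
    simpa [hD] using sum_abs_sub_rpow_le_sSup_rpow hScomp (by linarith) hy hx
  have hpenalty : t ^ p * (ρ / 2) * ∑ i, |(y - x) i| ^ p ≤ t * (ε / 2) := by
    have hεb : b * (D ^ p * ρ) = ε := div_mul_cancel₀ _ hscale.ne'
    calc t ^ p * (ρ / 2) * ∑ i, |(y - x) i| ^ p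
        = t * b * (ρ / 2) * ∑ i, |(y - x) i| ^ p := by
          rw [Real.rpow_one_div_sub_one_rpow hb hp.ne']
      _ ≤ t * b * (ρ / 2) * D ^ p := by gcongr
      _ = t * (ε / 2) := by rw [← hεb]; ring
  have hdescent :=
    add_le_holder_model_of_convexOn hS (hr.subset (subset_univ S) hS) hHolder hx hy hα
  rw [← hx'] at hdescent
  have hgain : t * ((-(inner ℝ (g x) (y - x) : ℝ) + r x - r y) - ε / 2) ≤
      (f x + r x) - (f x' + r x') := by
    linarith [hαmin t ht]
  rw [Real.rpow_neg hb.le, inv_mul_eq_div]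
  linarith [(le_div_iff₀' (by positivity : 0 < t)).2 hgain]

theorem stmt_6 (n : ℕ) (f r : EuclideanSpace ℝ (Fin n) → ℝ)
    (g : EuclideanSpace ℝ (Fin n) → EuclideanSpace ℝ (Fin n))
    (S : Set (EuclideanSpace ℝ (Fin n)))
    (p ρ ε D : ℝ) (x y x' : EuclideanSpace ℝ (Fin n)) (α : ℝ)
    (hS : Convex ℝ S) (hScomp : IsCompact S)
    (hr : ConvexOn ℝ Set.univ r)
    (hgrad : ∀ u, HasGradientAt f (g u) u)
    (hp : 1 < p) (hρ : 0 < ρ)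
    (hHolder : ∀ u ∈ S, ∀ v ∈ S,
      f v ≤ f u + (inner ℝ (g u) (v - u) : ℝ) + ρ / 2 * ∑ i, |(v - u) i| ^ p)
    (hD : D = sSup ((fun q : EuclideanSpace ℝ (Fin n) × EuclideanSpace ℝ (Fin n) =>
      (∑ i, |q.1 i - q.2 i| ^ p) ^ (1 / p)) '' (S ×ˢ S)))
    (hε : 0 < ε) (hεD : ε < D ^ p * ρ)
    (hx : x ∈ S) (hy : y ∈ S)
    (hymin : ∀ u ∈ S,
      f x + (inner ℝ (g x) (y - x) : ℝ) + r y ≤ f x + (inner ℝ (g x) (u - x) : ℝ) + r u)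
    (hα : α ∈ Set.Icc (0 : ℝ) 1)
    (hαmin : ∀ t ∈ Set.Icc (0 : ℝ) 1,
      α * (inner ℝ (g x) (y - x) : ℝ) + α ^ p * (ρ / 2) * ∑ i, |(y - x) i| ^ p
          + (1 - α) * r x + α * r y ≤
        t * (inner ℝ (g x) (y - x) : ℝ) + t ^ p * (ρ / 2) * ∑ i, |(y - x) i| ^ p
          + (1 - t) * r x + t * r y)
    (hx' : x' = (1 - α) • x + α • y) :
    -(inner ℝ (g x) (y - x) : ℝ) + r x - r y ≤
      (ε / (D ^ p * ρ)) ^ (-(1 / (p - 1))) * ((f x + r x) - (f x' + r x')) + ε / 2 :=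
  stmt_6_general n f r g S p ρ ε D x y x' α hS hScomp hr hp hρ hHolder hD hε hεD hx hy hα hαmin hx'
end

section
/- Suppose λ^{k+1} = (β - 1/γ)(x_N^k - x_N^{k+1}) + ∇_N f(x_1^{k+1},...,x_{N-1}^{k+1}, x_N^k) holds for all k (as in proximal ADMM-g with A_N = I), and ∇f is L-Lipschitz. Then ‖λ^{k+1} - λ^k‖² ≤ 3(β - 1/γ)²‖x_N^k - x_N^{k+1}‖² + 3((β - 1/γ)² + L²)‖x_N^{k-1} - x_N^k‖² + 3L² Σ_{i=1}^{N-1}‖x_i^{k+1} - x_i^k‖². -/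
set_option maxHeartbeats 1000000 in
private lemma comp_sq_le {N : ℕ} {n : Fin (N + 1) → ℕ}
    (u : PiLp 2 (fun i : Fin (N + 1) => EuclideanSpace ℝ (Fin (n i))))
    (i : Fin (N + 1)) : ‖u i‖ ^ 2 ≤ ‖u‖ ^ 2 := by
  conv_rhs => rw [PiLp.norm_sq_eq_of_L2]
  exact Finset.single_le_sum (f := fun j => ‖u j‖ ^ 2)
    (fun j _ => by positivity) (Finset.mem_univ i)

set_option maxHeartbeats 1000000 in


theorem stmt_12 (N : ℕ) (n : Fin (N + 1) → ℕ)
    (f : PiLp 2 (fun i : Fin (N + 1) => EuclideanSpace ℝ (Fin (n i))) → ℝ)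
    (G : PiLp 2 (fun i : Fin (N + 1) => EuclideanSpace ℝ (Fin (n i))) →
      PiLp 2 (fun i : Fin (N + 1) => EuclideanSpace ℝ (Fin (n i))))
    (L β γ : ℝ)
    (x : ℕ → PiLp 2 (fun i : Fin (N + 1) => EuclideanSpace ℝ (Fin (n i))))
    (y : ℕ → PiLp 2 (fun i : Fin (N + 1) => EuclideanSpace ℝ (Fin (n i))))
    (lam : ℕ → EuclideanSpace ℝ (Fin (n (Fin.last N))))
    (hL : 0 < L) (hβ : 0 < β) (hγ : 0 < γ)
    (hgrad : ∀ u, HasGradientAt f (G u) u)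
    (hlip : LipschitzWith (Real.toNNReal L) G)
    -- y k is the mixed point (x₁^{k+1}, …, x_{N-1}^{k+1}, x_N^k)
    (hylast : ∀ k, y k (Fin.last N) = x k (Fin.last N))
    (hyother : ∀ k, ∀ i : Fin (N + 1), i ≠ Fin.last N → y k i = x (k + 1) i)
    -- dual update of proximal ADMM-g with A_N = I
    (hdual : ∀ k, lam (k + 1) =
      (β - 1 / γ) • (x k (Fin.last N) - x (k + 1) (Fin.last N)) + G (y k) (Fin.last N))
    (k : ℕ) (hk : 1 ≤ k) :
    ‖lam (k + 1) - lam k‖ ^ 2 ≤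
      3 * (β - 1 / γ) ^ 2 * ‖x k (Fin.last N) - x (k + 1) (Fin.last N)‖ ^ 2
        + 3 * ((β - 1 / γ) ^ 2 + L ^ 2) * ‖x (k - 1) (Fin.last N) - x k (Fin.last N)‖ ^ 2
        + 3 * L ^ 2 * ∑ i : Fin N, ‖x (k + 1) i.castSucc - x k i.castSucc‖ ^ 2 := by
  have hk1 : k - 1 + 1 = k := Nat.succ_pred_eq_of_pos hk
  have hB := hdual (k - 1)
  rw [hk1] at hB
  have hdiff : lam (k + 1) - lam k
      = (β - 1 / γ) • (x k (Fin.last N) - x (k + 1) (Fin.last N))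
        - (β - 1 / γ) • (x (k - 1) (Fin.last N) - x k (Fin.last N))
        + (G (y k) (Fin.last N) - G (y (k - 1)) (Fin.last N)) := by
    rw [hdual k, hB]; abel
  have hy : ‖y k - y (k - 1)‖ ^ 2
      = ‖x (k - 1) (Fin.last N) - x k (Fin.last N)‖ ^ 2
        + ∑ i : Fin N, ‖x (k + 1) i.castSucc - x k i.castSucc‖ ^ 2 := by
    rw [PiLp.norm_sq_eq_of_L2, Fin.sum_univ_castSucc, add_comm]
    congr 1
    · simp only [PiLp.sub_apply, hylast]
      rw [norm_sub_rev]
    · apply Finset.sum_congr rfl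
      intro i _
      have hne : (i.castSucc : Fin (N + 1)) ≠ Fin.last N :=
        ne_of_lt (Fin.castSucc_lt_last i)
      simp only [PiLp.sub_apply, hyother k _ hne, hyother (k - 1) _ hne, hk1]
  have hCsq : ‖G (y k) (Fin.last N) - G (y (k - 1)) (Fin.last N)‖ ^ 2
      ≤ L ^ 2 * (‖x (k - 1) (Fin.last N) - x k (Fin.last N)‖ ^ 2
          + ∑ i : Fin N, ‖x (k + 1) i.castSucc - x k i.castSucc‖ ^ 2) := by
    have h1 : ‖G (y k) (Fin.last N) - G (y (k - 1)) (Fin.last N)‖ ^ 2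
        ≤ ‖G (y k) - G (y (k - 1))‖ ^ 2 := by
      have := comp_sq_le (G (y k) - G (y (k - 1))) (Fin.last N)
      simpa [PiLp.sub_apply] using this
    have h2 : ‖G (y k) - G (y (k - 1))‖ ≤ L * ‖y k - y (k - 1)‖ := by
      have h := hlip.dist_le_mul (y k) (y (k - 1))
      rw [dist_eq_norm, dist_eq_norm, Real.coe_toNNReal L hL.le] at h
      exact h
    have h3 : ‖G (y k) - G (y (k - 1))‖ ^ 2 ≤ L ^ 2 * ‖y k - y (k - 1)‖ ^ 2 := by
      nlinarith [norm_nonneg (G (y k) - G (y (k - 1))), norm_nonneg (y k - y (k - 1))]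
    rw [← hy]; linarith
  have hA : ‖(β - 1 / γ) • (x k (Fin.last N) - x (k + 1) (Fin.last N))‖ ^ 2
      = (β - 1 / γ) ^ 2 * ‖x k (Fin.last N) - x (k + 1) (Fin.last N)‖ ^ 2 := by
    rw [norm_smul, Real.norm_eq_abs, mul_pow, sq_abs]
  have hBn : ‖(β - 1 / γ) • (x (k - 1) (Fin.last N) - x k (Fin.last N))‖ ^ 2
      = (β - 1 / γ) ^ 2 * ‖x (k - 1) (Fin.last N) - x k (Fin.last N)‖ ^ 2 := by
    rw [norm_smul, Real.norm_eq_abs, mul_pow, sq_abs]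
  have htri : ‖lam (k + 1) - lam k‖
      ≤ ‖(β - 1 / γ) • (x k (Fin.last N) - x (k + 1) (Fin.last N))‖
        + ‖(β - 1 / γ) • (x (k - 1) (Fin.last N) - x k (Fin.last N))‖
        + ‖G (y k) (Fin.last N) - G (y (k - 1)) (Fin.last N)‖ := by
    rw [hdiff]
    refine le_trans (norm_add_le _ _) ?_
    gcongr
    exact norm_sub_le _ _
  have hsq : ‖lam (k + 1) - lam k‖ ^ 2
      ≤ (‖(β - 1 / γ) • (x k (Fin.last N) - x (k + 1) (Fin.last N))‖
        + ‖(β - 1 / γ) • (x (k - 1) (Fin.last N) - x k (Fin.last N))‖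
        + ‖G (y k) (Fin.last N) - G (y (k - 1)) (Fin.last N)‖) ^ 2 :=
    pow_le_pow_left₀ (norm_nonneg _) htri 2
  set a := ‖(β - 1 / γ) • (x k (Fin.last N) - x (k + 1) (Fin.last N))‖ with ha'
  set b := ‖(β - 1 / γ) • (x (k - 1) (Fin.last N) - x k (Fin.last N))‖ with hb'
  set c := ‖G (y k) (Fin.last N) - G (y (k - 1)) (Fin.last N)‖ with hc'
  have h3 : (a + b + c) ^ 2 ≤ 3 * a ^ 2 + 3 * b ^ 2 + 3 * c ^ 2 := by
    nlinarith [sq_nonneg (a - b), sq_nonneg (a - c), sq_nonneg (b - c)]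
  nlinarith [hsq, h3, hA, hBn, hCsq]
end

section
/- Let β > ((18√3+6)/13)L and set z = β − 1/γ where γ ∈ ((13β − √(13β² − 12βL − 72L²))/(6L² + βL + 13β²), (13β + √(13β² − 12βL − 72L²))/(6L² + βL + 13β²)). Then γ > 0 and (L+β)/2 − 1/γ + (6/β)(β − 1/γ)² + 3L²/β < 0. -/
theorem stmt_14 (L β γ : ℝ) (hL : 0 < L)
    (hβ : ((18 * Real.sqrt 3 + 6) / 13) * L < β)
    (hγ1 : (13 * β - Real.sqrt (13 * β ^ 2 - 12 * β * L - 72 * L ^ 2))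
        / (6 * L ^ 2 + β * L + 13 * β ^ 2) < γ)
    (hγ2 : γ < (13 * β + Real.sqrt (13 * β ^ 2 - 12 * β * L - 72 * L ^ 2))
        / (6 * L ^ 2 + β * L + 13 * β ^ 2)) :
    0 < γ ∧
      (L + β) / 2 - 1 / γ + (6 / β) * (β - 1 / γ) ^ 2 + 3 * L ^ 2 / β < 0 := by
  have ht : Real.sqrt 3 ^ 2 = 3 := Real.sq_sqrt (by norm_num)
  have ht1 : (1 : ℝ) ≤ Real.sqrt 3 := by
    rw [show (1:ℝ) = Real.sqrt 1 by simp]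
    exact Real.sqrt_le_sqrt (by norm_num)
  have hβ0 : 0 < β := lt_trans (by positivity) hβ
  have hA : 0 < 6 * L ^ 2 + β * L + 13 * β ^ 2 := by positivity
  have hD : 0 ≤ 13 * β ^ 2 - 12 * β * L - 72 * L ^ 2 := by
    have hf1 : 0 < β - (18 * Real.sqrt 3 + 6) / 13 * L := by linarith
    have hf2 : 0 < β + (18 * Real.sqrt 3 - 6) / 13 * L := by nlinarith
    nlinarith [mul_pos hf1 hf2]
  set s := Real.sqrt (13 * β ^ 2 - 12 * β * L - 72 * L ^ 2) with hs
  have hs0 : 0 ≤ s := Real.sqrt_nonneg _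
  have hs2 : s ^ 2 = 13 * β ^ 2 - 12 * β * L - 72 * L ^ 2 := Real.sq_sqrt hD
  have hslt : s < 13 * β := by
    nlinarith [mul_pos hβ0 hL, mul_pos hL hL]
  -- bounds in cleared form
  have h1 : 13 * β - s < (6 * L ^ 2 + β * L + 13 * β ^ 2) * γ := by
    have := (div_lt_iff₀ hA).mp hγ1
    linarith
  have h2 : (6 * L ^ 2 + β * L + 13 * β ^ 2) * γ < 13 * β + s := by
    have := (lt_div_iff₀ hA).mp hγ2
    linarith
  have hγ0 : 0 < γ := by
    by_contra h
    push_neg at h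
    nlinarith [mul_nonpos_of_nonneg_of_nonpos hA.le h]
  refine ⟨hγ0, ?_⟩
  have hkey : (6 * L ^ 2 + β * L + 13 * β ^ 2) * γ ^ 2 - 26 * β * γ + 12 < 0 := by
    have hsq : ((6 * L ^ 2 + β * L + 13 * β ^ 2) * γ - 13 * β) ^ 2 < s ^ 2 := by
      nlinarith
    rw [hs2] at hsq
    have hA2 : 0 < (6 * L ^ 2 + β * L + 13 * β ^ 2) := hA
    nlinarith [hsq]
  have heq : (L + β) / 2 - 1 / γ + (6 / β) * (β - 1 / γ) ^ 2 + 3 * L ^ 2 / β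
      = ((6 * L ^ 2 + β * L + 13 * β ^ 2) * γ ^ 2 - 26 * β * γ + 12) / (2 * β * γ ^ 2) := by
    field_simp
    ring
  rw [heq]
  exact div_neg_of_neg_of_pos hkey (by positivity)
end

section
/- Suppose A_N ∈ R^{m×n_N} has full row rank with σ_N = σ_min(A_N A_N^T) > 0, ∇f is L-Lipschitz, and the dual update satisfies A_N^T λ^{k+1} = ∇_N f(x_1^{k+1},...,x_{N-1}^{k+1}, x_N^k) − L(x_N^k − x_N^{k+1}) for all k (as in proximal ADMM-m). Then ‖λ^{k+1} − λ^k‖² ≤ (3L²/σ_N)‖x_N^k − x_N^{k+1}‖² + (6L²/σ_N)‖x_N^{k-1} − x_N^k‖² + (3L²/σ_N) Σ_{i=1}^{N-1}‖x_i^k − x_i^{k+1}‖². -/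
/-!
Differencing two consecutive dual updates gives
`A_Nᵀ (λ^{k+1} - λ^k) = (∇_N f(y^k) - ∇_N f(y^{k-1})) - L (x_N^k - x_N^{k+1}) + L (x_N^{k-1} - x_N^k)`,
where `y^k` is the mixed point. Bound the three terms by the triangle inequality and
`(a + b + c)² ≤ 3 (a² + b² + c²)`, the gradient term by the Lipschitz bound
`L² ‖y^k - y^{k-1}‖²`, and invert `A_Nᵀ` using `σ_N ‖λ‖² ≤ ‖A_Nᵀ λ‖²`.
-/

open Finset

lemma add_add_sq_le_three_mul (a b c : ℝ) : (a + b + c) ^ 2 ≤ 3 * (a ^ 2 + b ^ 2 + c ^ 2) := by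
  nlinarith [sq_nonneg (a - b), sq_nonneg (b - c), sq_nonneg (a - c)]

section DualStep

variable {E F : Type*} [NormedAddCommGroup E] [NormedSpace ℝ E] [NormedAddCommGroup F]
  [NormedSpace ℝ F]

theorem sq_norm_sub_le_of_eq_sub_smul_sub {A : F →L[ℝ] E} {σ L : ℝ} (hσ : 0 < σ) (hL : 0 ≤ L)
    (hA : ∀ μ, σ * ‖μ‖ ^ 2 ≤ ‖A μ‖ ^ 2) {μ μ' : F} {g g' p q r : E}
    (h : A μ = g - L • (p - q)) (h' : A μ' = g' - L • (q - r)) :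
    ‖μ' - μ‖ ^ 2 ≤ 3 / σ * (‖g' - g‖ ^ 2 + L ^ 2 * ‖q - r‖ ^ 2 + L ^ 2 * ‖p - q‖ ^ 2) := by
  have hdiff : A (μ' - μ) = (g' - g) - L • (q - r) + L • (p - q) := by
    rw [map_sub, h, h']
    abel
  have hnorm : ‖A (μ' - μ)‖ ≤ ‖g' - g‖ + L * ‖q - r‖ + L * ‖p - q‖ := by
    rw [hdiff]
    calc _ ≤ ‖g' - g‖ + ‖L • (q - r)‖ + ‖L • (p - q)‖ :=
          (norm_add_le _ _).trans (by gcongr; exact norm_sub_le _ _)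
      _ = _ := by rw [norm_smul, norm_smul, Real.norm_of_nonneg hL]
  rw [div_mul_eq_mul_div, le_div_iff₀ hσ, mul_comm]
  calc σ * ‖μ' - μ‖ ^ 2 ≤ ‖A (μ' - μ)‖ ^ 2 := hA _
    _ ≤ (‖g' - g‖ + L * ‖q - r‖ + L * ‖p - q‖) ^ 2 := by gcongr
    _ ≤ 3 * (‖g' - g‖ ^ 2 + L ^ 2 * ‖q - r‖ ^ 2 + L ^ 2 * ‖p - q‖ ^ 2) := by
      have := add_add_sq_le_three_mul ‖g' - g‖ (L * ‖q - r‖) (L * ‖p - q‖)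
      rwa [mul_pow, mul_pow] at this

end DualStep

namespace PiLp

variable {ι : Type*} [Fintype ι] {β : ι → Type*} [∀ i, NormedAddCommGroup (β i)]

theorem sq_norm_sub_apply_le_of_lipschitzWith {G : PiLp 2 β → PiLp 2 β} {K : NNReal}
    (hG : LipschitzWith K G) (u v : PiLp 2 β) (i : ι) :
    ‖G u i - G v i‖ ^ 2 ≤ K ^ 2 * ‖u - v‖ ^ 2 := by
  rw [← mul_pow]
  gcongr
  simpa only [← dist_eq_norm] using (dist_apply_le _ _ i).trans (hG.dist_le_mul u v)

theorem sq_norm_eq_sum_castSucc_add {N : ℕ} {β : Fin (N + 1) → Type*}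
    [∀ i, NormedAddCommGroup (β i)] (u : PiLp 2 β) :
    ‖u‖ ^ 2 = ∑ i : Fin N, ‖u i.castSucc‖ ^ 2 + ‖u (Fin.last N)‖ ^ 2 := by
  rw [norm_sq_eq_of_L2, Fin.sum_univ_castSucc]

end PiLp

theorem stmt_15_general (N m : ℕ) (n : Fin (N + 1) → ℕ)
    (G : PiLp 2 (fun i : Fin (N + 1) => EuclideanSpace ℝ (Fin (n i))) →
      PiLp 2 (fun i : Fin (N + 1) => EuclideanSpace ℝ (Fin (n i))))
    (AN : EuclideanSpace ℝ (Fin (n (Fin.last N))) →L[ℝ] EuclideanSpace ℝ (Fin m))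
    (L σN : ℝ)
    (x : ℕ → PiLp 2 (fun i : Fin (N + 1) => EuclideanSpace ℝ (Fin (n i))))
    (y : ℕ → PiLp 2 (fun i : Fin (N + 1) => EuclideanSpace ℝ (Fin (n i))))
    (lam : ℕ → EuclideanSpace ℝ (Fin m))
    (hL : 0 < L) (hσ : 0 < σN)
    -- σN is the smallest eigenvalue of A_N A_N^T
    (hσmin : ∀ μ : EuclideanSpace ℝ (Fin m),
      σN * ‖μ‖ ^ 2 ≤ ‖ContinuousLinearMap.adjoint AN μ‖ ^ 2)
    (hlip : LipschitzWith (Real.toNNReal L) G)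
    -- y k is the mixed point (x₁^{k+1}, …, x_{N-1}^{k+1}, x_N^k)
    (hylast : ∀ k, y k (Fin.last N) = x k (Fin.last N))
    (hyother : ∀ k, ∀ i : Fin (N + 1), i ≠ Fin.last N → y k i = x (k + 1) i)
    -- dual update of proximal ADMM-m
    (hdual : ∀ k, ContinuousLinearMap.adjoint AN (lam (k + 1)) =
      G (y k) (Fin.last N) - L • (x k (Fin.last N) - x (k + 1) (Fin.last N)))
    (k : ℕ) (hk : 1 ≤ k) :
    ‖lam (k + 1) - lam k‖ ^ 2 ≤
      (3 * L ^ 2 / σN) * ‖x k (Fin.last N) - x (k + 1) (Fin.last N)‖ ^ 2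
        + (6 * L ^ 2 / σN) * ‖x (k - 1) (Fin.last N) - x k (Fin.last N)‖ ^ 2
        + (3 * L ^ 2 / σN) * ∑ i : Fin N, ‖x k i.castSucc - x (k + 1) i.castSucc‖ ^ 2 := by
  obtain ⟨j, rfl⟩ := Nat.exists_eq_add_of_le' hk
  rw [Nat.add_sub_cancel]
  have hy : ‖y (j + 1) - y j‖ ^ 2 =
      ∑ i : Fin N, ‖x (j + 1) i.castSucc - x (j + 1 + 1) i.castSucc‖ ^ 2
        + ‖x j (Fin.last N) - x (j + 1) (Fin.last N)‖ ^ 2 := by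
    rw [PiLp.sq_norm_eq_sum_castSucc_add, PiLp.sub_apply, hylast, hylast, norm_sub_rev]
    congr 1
    refine sum_congr rfl fun i _ => ?_
    have hi := (Fin.castSucc_lt_last i).ne
    rw [PiLp.sub_apply, hyother _ _ hi, hyother _ _ hi, norm_sub_rev]
  have hgrad := PiLp.sq_norm_sub_apply_le_of_lipschitzWith hlip (y (j + 1)) (y j) (Fin.last N)
  rw [Real.coe_toNNReal L hL.le, hy] at hgrad
  calc _ ≤ 3 / σN * (‖G (y (j + 1)) (Fin.last N) - G (y j) (Fin.last N)‖ ^ 2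
          + L ^ 2 * ‖x (j + 1) (Fin.last N) - x (j + 1 + 1) (Fin.last N)‖ ^ 2
          + L ^ 2 * ‖x j (Fin.last N) - x (j + 1) (Fin.last N)‖ ^ 2) :=
        sq_norm_sub_le_of_eq_sub_smul_sub hσ hL.le hσmin (hdual j) (hdual (j + 1))
    _ ≤ _ := by
      grw [hgrad]
      exact (by ring : _ = _).le

theorem stmt_15 (N m : ℕ) (n : Fin (N + 1) → ℕ)
    (f : PiLp 2 (fun i : Fin (N + 1) => EuclideanSpace ℝ (Fin (n i))) → ℝ)
    (G : PiLp 2 (fun i : Fin (N + 1) => EuclideanSpace ℝ (Fin (n i))) →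
      PiLp 2 (fun i : Fin (N + 1) => EuclideanSpace ℝ (Fin (n i))))
    (AN : EuclideanSpace ℝ (Fin (n (Fin.last N))) →L[ℝ] EuclideanSpace ℝ (Fin m))
    (L σN : ℝ)
    (x : ℕ → PiLp 2 (fun i : Fin (N + 1) => EuclideanSpace ℝ (Fin (n i))))
    (y : ℕ → PiLp 2 (fun i : Fin (N + 1) => EuclideanSpace ℝ (Fin (n i))))
    (lam : ℕ → EuclideanSpace ℝ (Fin m))
    (hL : 0 < L) (hσ : 0 < σN)
    -- σN is the smallest eigenvalue of A_N A_N^T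
    (hσmin : ∀ μ : EuclideanSpace ℝ (Fin m),
      σN * ‖μ‖ ^ 2 ≤ ‖ContinuousLinearMap.adjoint AN μ‖ ^ 2)
    (hgrad : ∀ u, HasGradientAt f (G u) u)
    (hlip : LipschitzWith (Real.toNNReal L) G)
    -- y k is the mixed point (x₁^{k+1}, …, x_{N-1}^{k+1}, x_N^k)
    (hylast : ∀ k, y k (Fin.last N) = x k (Fin.last N))
    (hyother : ∀ k, ∀ i : Fin (N + 1), i ≠ Fin.last N → y k i = x (k + 1) i)
    -- dual update of proximal ADMM-m
    (hdual : ∀ k, ContinuousLinearMap.adjoint AN (lam (k + 1)) =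
      G (y k) (Fin.last N) - L • (x k (Fin.last N) - x (k + 1) (Fin.last N)))
    (k : ℕ) (hk : 1 ≤ k) :
    ‖lam (k + 1) - lam k‖ ^ 2 ≤
      (3 * L ^ 2 / σN) * ‖x k (Fin.last N) - x (k + 1) (Fin.last N)‖ ^ 2
        + (6 * L ^ 2 / σN) * ‖x (k - 1) (Fin.last N) - x k (Fin.last N)‖ ^ 2
        + (3 * L ^ 2 / σN) * ∑ i : Fin N, ‖x k i.castSucc - x (k + 1) i.castSucc‖ ^ 2 :=
  stmt_15_general N m n G AN L σN x y lam hL hσ hσmin hlip hylast hyother hdual k hk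
end
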